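/- Error bound under perturbed initialization: suppose W₁ = AᵀP + C with AC = 0, and AW₁W₂⋯W_h x = b. Then AᵀP W₂⋯W_h x = θ* (the minimum norm solution), and ‖W₁W₂⋯W_h x − θ*‖ = ‖CW₂⋯W_h x‖ ≤ ‖W₂‖⋯‖W_h‖·‖x‖·‖C‖, where ‖·‖ on matrices is the operator norm. -/

import Mathlib

open Matrix

/-- The Euclidean norm of a vector in `Fin d → ℝ`. -/
noncomputable def eNorm {d : ℕ} (v : Fin d → ℝ) : ℝ :=
  ‖(WithLp.equiv 2 (Fin d → ℝ)).symm v‖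

/-- The ℓ²→ℓ² operator (spectral) norm of a real matrix. -/
noncomputable def l2OpNorm {m p : ℕ} (M : Matrix (Fin m) (Fin p) ℝ) : ℝ :=
  ‖LinearMap.toContinuousLinearMap (Matrix.toEuclideanLin M)‖

/-!
Since `A * C = 0`, applying `A` to `W₁ W₂ ⋯ W_h x = Aᵀ P y + C y` (with `y = W₂ ⋯ W_h x`) gives
`A Aᵀ (P y) = b`. Full row rank makes `A Aᵀ` invertible, so `P y = (A Aᵀ)⁻¹ b` and `Aᵀ P y = θ*`.
The error is then the remaining summand `C y`, bounded by submultiplicativity of the operator norm.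
-/

namespace Matrix

variable {m n R : Type*} [Fintype m] [DecidableEq m] [Fintype n]

theorem isUnit_of_rank_eq_card [Field R] {M : Matrix m m R} (hM : M.rank = Fintype.card m) :
    IsUnit M := by
  rw [← mulVec_surjective_iff_isUnit, ← coe_mulVecLin, ← LinearMap.range_eq_top]
  apply Submodule.eq_top_of_finrank_eq
  rw [← rank, hM, Module.finrank_fintype_fun_eq_card]

theorem isUnit_mul_transpose_of_rank_eq_card [Field R] [LinearOrder R] [IsStrictOrderedRing R]
    {A : Matrix m n R} (hA : A.rank = Fintype.card m) : IsUnit (A * Aᵀ) :=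
  isUnit_of_rank_eq_card (by rw [rank_self_mul_transpose, hA])

theorem transpose_mulVec_eq_inv_mulVec_of_mul_eq_zero [CommRing R] {A P : Matrix m n R}
    {C : Matrix n n R} (hAAt : IsUnit (A * Aᵀ)) (hC : A * C = 0) {y : n → R} {b : m → R}
    (hsol : A *ᵥ ((Aᵀ * P + C) *ᵥ y) = b) :
    Aᵀ *ᵥ (P *ᵥ y) = Aᵀ *ᵥ ((A * Aᵀ)⁻¹ *ᵥ b) := by
  have hnormal : (A * Aᵀ) *ᵥ (P *ᵥ y) = b := by
    rw [← hsol, mulVec_mulVec, mulVec_mulVec, Matrix.mul_add, hC, add_zero,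
      Matrix.mul_assoc]
  rw [← hnormal, mulVec_mulVec (P *ᵥ y), nonsing_inv_mul _ ((isUnit_iff_isUnit_det _).mp hAAt),
    one_mulVec]

end Matrix

lemma l2OpNorm_nonneg {m p : ℕ} (M : Matrix (Fin m) (Fin p) ℝ) : 0 ≤ l2OpNorm M :=
  norm_nonneg _

lemma eNorm_mulVec_le {m p : ℕ} (M : Matrix (Fin m) (Fin p) ℝ) (v : Fin p → ℝ) :
    eNorm (M *ᵥ v) ≤ l2OpNorm M * eNorm v := by
  have h := (LinearMap.toContinuousLinearMap (toEuclideanLin M)).le_opNorm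
    ((WithLp.equiv 2 (Fin p → ℝ)).symm v)
  rwa [LinearMap.coe_toContinuousLinearMap'] at h

lemma eNorm_list_prod_mulVec_le {d : ℕ} (l : List (Matrix (Fin d) (Fin d) ℝ)) (v : Fin d → ℝ) :
    eNorm (l.prod *ᵥ v) ≤ (l.map l2OpNorm).prod * eNorm v := by
  induction l with
  | nil => simp
  | cons M l ih =>
    calc eNorm ((M :: l).prod *ᵥ v) = eNorm (M *ᵥ (l.prod *ᵥ v)) := by
          rw [List.prod_cons, mulVec_mulVec]
      _ ≤ l2OpNorm M * eNorm (l.prod *ᵥ v) := eNorm_mulVec_le _ _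
      _ ≤ l2OpNorm M * ((l.map l2OpNorm).prod * eNorm v) := by
          gcongr
          exact l2OpNorm_nonneg M
      _ = ((M :: l).map l2OpNorm).prod * eNorm v := by
          rw [List.map_cons, List.prod_cons, mul_assoc]

theorem stmt_16_general {n d h : ℕ}
    (A : Matrix (Fin n) (Fin d) ℝ) (hrank : A.rank = n) (b : Fin n → ℝ)
    (θstar : Fin d → ℝ) (hθstar : θstar = Aᵀ.mulVec ((A * Aᵀ)⁻¹.mulVec b))
    (W₁ : Matrix (Fin d) (Fin d) ℝ)
    -- `W i` for `i : Fin (h-1)` plays the role of `W_{i+2}`; `B = W₂ ⋯ W_h`.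
    (W : Fin (h - 1) → Matrix (Fin d) (Fin d) ℝ)
    (B : Matrix (Fin d) (Fin d) ℝ) (hB : B = (List.ofFn W).prod)
    (x : Fin d → ℝ)
    (P : Matrix (Fin n) (Fin d) ℝ) (C : Matrix (Fin d) (Fin d) ℝ)
    (hW₁ : W₁ = Aᵀ * P + C) (hC : A * C = 0)
    (hsol : A.mulVec ((W₁ * B).mulVec x) = b) :
    (Aᵀ * P * B).mulVec x = θstar ∧
    eNorm ((W₁ * B).mulVec x - θstar) = eNorm ((C * B).mulVec x) ∧
    eNorm ((C * B).mulVec x) ≤ (∏ i, l2OpNorm (W i)) * eNorm x * l2OpNorm C := by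
  have hAAt : IsUnit (A * Aᵀ) :=
    isUnit_mul_transpose_of_rank_eq_card (by rw [hrank, Fintype.card_fin])
  rw [← mulVec_mulVec, hW₁] at hsol
  have hmin : (Aᵀ * P * B) *ᵥ x = θstar := by
    rw [hθstar, ← transpose_mulVec_eq_inv_mulVec_of_mul_eq_zero hAAt hC hsol, mulVec_mulVec,
      mulVec_mulVec]
  refine ⟨hmin, ?_, ?_⟩
  · rw [← hmin, hW₁, add_mul, add_mulVec, add_sub_cancel_left]
  · have hB_le : eNorm (B *ᵥ x) ≤ (∏ i, l2OpNorm (W i)) * eNorm x := by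
      simpa only [hB, List.map_ofFn, List.prod_ofFn, Function.comp_apply] using
        eNorm_list_prod_mulVec_le (List.ofFn W) x
    calc eNorm ((C * B) *ᵥ x) = eNorm (C *ᵥ (B *ᵥ x)) := by rw [mulVec_mulVec]
      _ ≤ l2OpNorm C * eNorm (B *ᵥ x) := eNorm_mulVec_le _ _
      _ ≤ l2OpNorm C * ((∏ i, l2OpNorm (W i)) * eNorm x) := by
          gcongr
          exact l2OpNorm_nonneg C
      _ = (∏ i, l2OpNorm (W i)) * eNorm x * l2OpNorm C := mul_comm _ _

theorem stmt_16 {n d h : ℕ} (hnd : n ≤ d) (hh : 1 ≤ h)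
    (A : Matrix (Fin n) (Fin d) ℝ) (hrank : A.rank = n) (b : Fin n → ℝ)
    (θstar : Fin d → ℝ) (hθstar : θstar = Aᵀ.mulVec ((A * Aᵀ)⁻¹.mulVec b))
    (W₁ : Matrix (Fin d) (Fin d) ℝ)
    -- `W i` for `i : Fin (h-1)` plays the role of `W_{i+2}`; `B = W₂ ⋯ W_h`.
    (W : Fin (h - 1) → Matrix (Fin d) (Fin d) ℝ)
    (B : Matrix (Fin d) (Fin d) ℝ) (hB : B = (List.ofFn W).prod)
    (x : Fin d → ℝ)
    (P : Matrix (Fin n) (Fin d) ℝ) (C : Matrix (Fin d) (Fin d) ℝ)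
    (hW₁ : W₁ = Aᵀ * P + C) (hC : A * C = 0)
    (hsol : A.mulVec ((W₁ * B).mulVec x) = b) :
    (Aᵀ * P * B).mulVec x = θstar ∧
    eNorm ((W₁ * B).mulVec x - θstar) = eNorm ((C * B).mulVec x) ∧
    eNorm ((C * B).mulVec x) ≤ (∏ i, l2OpNorm (W i)) * eNorm x * l2OpNorm C :=
  stmt_16_general A hrank b θstar hθstar W₁ W B hB x P C hW₁ hC hsol
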